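/- arXiv:2111.04104 — 9 statements merged into one kernel-verified Lean document; each statement's English description precedes it below -/
import Mathlib

section
/- Let S, B, Y be nonempty finite types and let p be a probability mass function on S × B × Y such that the first two coordinates are conditionally independent given the third, i.e. P(S=s, B=b, Y=y) · P(Y=y) = P(S=s, Y=y) · P(B=b, Y=y) for all s, b, y. Then for all s ∈ S, b ∈ B, y ∈ Y with P(S=s, B=b) > 0, P(S=s) > 0, P(B=b) > 0 and P(Y=y) > 0, one has P(Y=y | S=s, B=b) = (P(Y=y | S=s) · P(Y=y | B=b) / P(Y=y)) · (P(S=s) · P(B=b) / P(S=s, B=b)). In particular, as a function of y, the full posterior P(Y=y | S=s, B=b) is proportional to P(Y=y | S=s) · P(Y=y | B=b) / P(Y=y). -/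
theorem stmt_0_general {S B Y : Type*} [Fintype S] [Fintype B] [Fintype Y]
    (p : S × B × Y → ℝ)
    -- conditional independence of the first two coordinates given the third:
    -- P(S=s, B=b, Y=y) · P(Y=y) = P(S=s, Y=y) · P(B=b, Y=y)
    (hci : ∀ (s : S) (b : B) (y : Y),
      p (s, b, y) * (∑ s' : S, ∑ b' : B, p (s', b', y)) =
        (∑ b' : B, p (s, b', y)) * (∑ s' : S, p (s', b, y))) :
    ∀ (s : S) (b : B) (y : Y),
      0 < (∑ y' : Y, p (s, b, y')) →                       -- P(S=s, B=b) > 0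
      0 < (∑ b' : B, ∑ y' : Y, p (s, b', y')) →            -- P(S=s) > 0
      0 < (∑ s' : S, ∑ y' : Y, p (s', b, y')) →            -- P(B=b) > 0
      0 < (∑ s' : S, ∑ b' : B, p (s', b', y)) →            -- P(Y=y) > 0
      p (s, b, y) / (∑ y' : Y, p (s, b, y')) =
        ((∑ b' : B, p (s, b', y)) / (∑ b' : B, ∑ y' : Y, p (s, b', y')) *
              ((∑ s' : S, p (s', b, y)) / (∑ s' : S, ∑ y' : Y, p (s', b, y'))) /
            (∑ s' : S, ∑ b' : B, p (s', b', y))) *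
          ((∑ b' : B, ∑ y' : Y, p (s, b', y')) *
              (∑ s' : S, ∑ y' : Y, p (s', b, y')) /
            (∑ y' : Y, p (s, b, y'))) := by
  intro s b y hSB hS hB hY
  -- The marginals P(S=s), P(B=b) cancel; what remains, with denominators cleared, is `hci`.
  field_simp
  linear_combination hci s b y

/-- for a pmf `p` on `S × B × Y` whose first two coordinates are
conditionally independent given the third, the full posterior satisfies
`P(Y=y | S=s, B=b) = (P(Y=y|S=s)·P(Y=y|B=b)/P(Y=y)) · (P(S=s)·P(B=b)/P(S=s,B=b))`
whenever all conditioning events have positive probability; in particular, as a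
function of `y`, `P(Y=y | S=s, B=b) ∝ P(Y=y|S=s)·P(Y=y|B=b)/P(Y=y)`. -/
theorem stmt_0 {S B Y : Type*} [Fintype S] [Fintype B] [Fintype Y]
    [Nonempty S] [Nonempty B] [Nonempty Y]
    (p : S × B × Y → ℝ) (hp : ∀ z, 0 ≤ p z) (hsum : ∑ z : S × B × Y, p z = 1)
    -- conditional independence of the first two coordinates given the third:
    -- P(S=s, B=b, Y=y) · P(Y=y) = P(S=s, Y=y) · P(B=b, Y=y)
    (hci : ∀ (s : S) (b : B) (y : Y),
      p (s, b, y) * (∑ s' : S, ∑ b' : B, p (s', b', y)) =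
        (∑ b' : B, p (s, b', y)) * (∑ s' : S, p (s', b, y))) :
    ∀ (s : S) (b : B) (y : Y),
      0 < (∑ y' : Y, p (s, b, y')) →                       -- P(S=s, B=b) > 0
      0 < (∑ b' : B, ∑ y' : Y, p (s, b', y')) →            -- P(S=s) > 0
      0 < (∑ s' : S, ∑ y' : Y, p (s', b, y')) →            -- P(B=b) > 0
      0 < (∑ s' : S, ∑ b' : B, p (s', b', y)) →            -- P(Y=y) > 0
      p (s, b, y) / (∑ y' : Y, p (s, b, y')) =
        ((∑ b' : B, p (s, b', y)) / (∑ b' : B, ∑ y' : Y, p (s, b', y')) *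
              ((∑ s' : S, p (s', b, y)) / (∑ s' : S, ∑ y' : Y, p (s', b, y'))) /
            (∑ s' : S, ∑ b' : B, p (s', b', y))) *
          ((∑ b' : B, ∑ y' : Y, p (s, b', y')) *
              (∑ s' : S, ∑ y' : Y, p (s', b, y')) /
            (∑ y' : Y, p (s, b, y'))) :=
  stmt_0_general p hci
end

section
/- Let S, B, Y be nonempty finite types and let p be a probability mass function on S × B × Y such that P(S=s, B=b, Y=y) · P(Y=y) = P(S=s, Y=y) · P(B=b, Y=y) for all s, b, y. Fix s ∈ S, b ∈ B with P(S=s, B=b) > 0, P(S=s) > 0, P(B=b) > 0, and assume that for every y' ∈ Y one has P(Y=y') > 0 and P(Y=y' | B=b) > 0. Then for every y ∈ Y, the normalized adjusted posterior equals the signal-only posterior: [P(Y=y | S=s, B=b) · P(Y=y) / P(Y=y | B=b)] / (Σ_{y' ∈ Y} P(Y=y' | S=s, B=b) · P(Y=y') / P(Y=y' | B=b)) = P(Y=y | S=s). -/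
/-! Conditional independence of `S` and `B` given `Y` turns each adjusted term
`P(Y=y' | S=s, B=b) · P(Y=y') / P(Y=y' | B=b)` into `P(S=s, Y=y')` times the factor
`P(B=b) / P(S=s, B=b)`, which does not depend on `y'` and so cancels on normalizing. -/

theorem div_sum_eq_div_sum_of_eq_const_mul {ι K : Type*} [Fintype ι] [Field K]
    {f g : ι → K} {c : K} (hc : c ≠ 0) (h : ∀ i, f i = c * g i) (i : ι) :
    f i / ∑ j, f j = g i / ∑ j, g j := by
  simp only [h, ← Finset.mul_sum, mul_div_mul_left _ _ hc]

theorem div_mul_div_div_eq_of_mul_eq_mul {K : Type*} [Field K] {a n q r m t : K}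
    (h : a * q = t * r) (hr : r ≠ 0) :
    a / n * q / (r / m) = m / n * t := by
  rw [div_mul_eq_mul_div, h]
  field_simp

theorem stmt_1_general {S B Y : Type*} [Fintype S] [Fintype B] [Fintype Y]
    (p : S × B × Y → ℝ)
    -- P(S=s, B=b, Y=y) · P(Y=y) = P(S=s, Y=y) · P(B=b, Y=y)
    (hci : ∀ (s : S) (b : B) (y : Y),
      p (s, b, y) * (∑ s' : S, ∑ b' : B, p (s', b', y)) =
        (∑ b' : B, p (s, b', y)) * (∑ s' : S, p (s', b, y)))
    (s : S) (b : B)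
    (hsb : 0 < (∑ y' : Y, p (s, b, y')))                   -- P(S=s, B=b) > 0
    (hb : 0 < (∑ s' : S, ∑ y' : Y, p (s', b, y')))         -- P(B=b) > 0
    (hyb : ∀ y' : Y,                                       -- P(Y=y' | B=b) > 0
      0 < (∑ s' : S, p (s', b, y')) / (∑ s' : S, ∑ y'' : Y, p (s', b, y''))) :
    ∀ y : Y,
      (p (s, b, y) / (∑ y' : Y, p (s, b, y')) *
            (∑ s' : S, ∑ b' : B, p (s', b', y)) /
          ((∑ s' : S, p (s', b, y)) / (∑ s' : S, ∑ y' : Y, p (s', b, y')))) /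
        (∑ y' : Y,
          p (s, b, y') / (∑ y'' : Y, p (s, b, y'')) *
              (∑ s' : S, ∑ b' : B, p (s', b', y')) /
            ((∑ s' : S, p (s', b, y')) /
              (∑ s' : S, ∑ y'' : Y, p (s', b, y'')))) =
      (∑ b' : B, p (s, b', y)) / (∑ b' : B, ∑ y' : Y, p (s, b', y')) := by
  intro y
  have hby (y' : Y) : 0 < ∑ s' : S, p (s', b, y') := (div_pos_iff_of_pos_right hb).1 (hyb y')
  rw [Finset.sum_comm (f := fun b' y' => p (s, b', y'))]
  exact div_sum_eq_div_sum_of_eq_const_mul (div_pos hb hsb).ne'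
    (fun y' => div_mul_div_div_eq_of_mul_eq_mul (hci s b y') (hby y').ne') y

/-- under the conditional-independence assumption, dividing the
full posterior `P(Y=y | S=s, B=b)` by the bias-conditional probability
`P(Y=y | B=b)`, multiplying by the prior `P(Y=y)` and renormalizing over `y`
recovers the signal-only posterior `P(Y=y | S=s)`. -/
theorem stmt_1 {S B Y : Type*} [Fintype S] [Fintype B] [Fintype Y]
    [Nonempty S] [Nonempty B] [Nonempty Y]
    (p : S × B × Y → ℝ) (hp : ∀ z, 0 ≤ p z) (hsum : ∑ z : S × B × Y, p z = 1)
    -- P(S=s, B=b, Y=y) · P(Y=y) = P(S=s, Y=y) · P(B=b, Y=y)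
    (hci : ∀ (s : S) (b : B) (y : Y),
      p (s, b, y) * (∑ s' : S, ∑ b' : B, p (s', b', y)) =
        (∑ b' : B, p (s, b', y)) * (∑ s' : S, p (s', b, y)))
    (s : S) (b : B)
    (hsb : 0 < (∑ y' : Y, p (s, b, y')))                   -- P(S=s, B=b) > 0
    (hs : 0 < (∑ b' : B, ∑ y' : Y, p (s, b', y')))         -- P(S=s) > 0
    (hb : 0 < (∑ s' : S, ∑ y' : Y, p (s', b, y')))         -- P(B=b) > 0
    (hy : ∀ y' : Y, 0 < (∑ s' : S, ∑ b' : B, p (s', b', y')))  -- P(Y=y') > 0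
    (hyb : ∀ y' : Y,                                       -- P(Y=y' | B=b) > 0
      0 < (∑ s' : S, p (s', b, y')) / (∑ s' : S, ∑ y'' : Y, p (s', b, y''))) :
    ∀ y : Y,
      (p (s, b, y) / (∑ y' : Y, p (s, b, y')) *
            (∑ s' : S, ∑ b' : B, p (s', b', y)) /
          ((∑ s' : S, p (s', b, y)) / (∑ s' : S, ∑ y' : Y, p (s', b, y')))) /
        (∑ y' : Y,
          p (s, b, y') / (∑ y'' : Y, p (s, b, y'')) *
              (∑ s' : S, ∑ b' : B, p (s', b', y')) /
            ((∑ s' : S, p (s', b, y')) /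
              (∑ s' : S, ∑ y'' : Y, p (s', b, y'')))) =
      (∑ b' : B, p (s, b', y)) / (∑ b' : B, ∑ y' : Y, p (s, b', y')) :=
  stmt_1_general p hci s b hsb hb hyb
end

section
/- Let Ω be a nonempty finite type with a probability mass function p, let Y : Ω → {0,1} satisfy P(Y=0) = P(Y=1) = 1/2, and let U, V : Ω → ℝ be random variables that are (a) conditionally independent given Y, i.e. for each i ∈ {0,1} and all u, v ∈ ℝ, P(U=u, V=v | Y=i) = P(U=u | Y=i) · P(V=v | Y=i), and (b) calibrated, i.e. P(Y=0 | U=u) = u for every u with P(U=u) > 0 and P(Y=0 | V=v) = v for every v with P(V=v) > 0. Then for all u, v ∈ ℝ: P(U=u and V=v) = 2 · (u·v + (1-u)·(1-v)) · P(U=u) · P(V=v). -/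
/-
Split the event `{U = u, V = v}` according to the label `Y`. Conditional independence
with `P(Y = i) = 1/2` gives `P(U = u, V = v, Y = i) = 2 P(U = u, Y = i) P(V = v, Y = i)`,
and calibration gives `P(U = u, Y = 0) = u P(U = u)` and `P(U = u, Y = 1) = (1 - u) P(U = u)`
(trivially so when `P(U = u) = 0`), and likewise for `V`. Summing over the two labels yields
`2 (u v + (1 - u)(1 - v)) P(U = u) P(V = v)`.
-/

namespace FiniteProb

variable {Ω : Type*} [Fintype Ω] (p : Ω → ℝ)

def prob (A : Ω → Prop) [DecidablePred A] : ℝ := ∑ ω, if A ω then p ω else 0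

variable {p}

theorem prob_nonneg (hp : ∀ ω, 0 ≤ p ω) (A : Ω → Prop) [DecidablePred A] :
    0 ≤ prob p A :=
  Finset.sum_nonneg fun ω _ => by split_ifs <;> simp [hp ω]

theorem prob_mono (hp : ∀ ω, 0 ≤ p ω) {A B : Ω → Prop} [DecidablePred A] [DecidablePred B]
    (hAB : ∀ ω, A ω → B ω) : prob p A ≤ prob p B :=
  Finset.sum_le_sum fun ω _ => by
    by_cases hA : A ω
    · simp [hA, hAB ω hA]
    · by_cases hB : B ω <;> simp [hA, hB, hp ω]

theorem prob_eq_sum_prob_and_eq {ι : Type*} [Fintype ι] [DecidableEq ι] (Y : Ω → ι)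
    (A : Ω → Prop) [DecidablePred A] :
    prob p A = ∑ i, prob p (fun ω => A ω ∧ Y ω = i) := by
  unfold prob
  rw [Finset.sum_comm]
  refine Finset.sum_congr rfl fun ω _ => ?_
  by_cases hA : A ω <;> simp [hA]

theorem prob_and_eq_mul_of_cond_eq (hp : ∀ ω, 0 ≤ p ω) {A B : Ω → Prop}
    [DecidablePred A] [DecidablePred B] {c : ℝ}
    (hcond : 0 < prob p B → prob p (fun ω => A ω ∧ B ω) / prob p B = c) :
    prob p (fun ω => B ω ∧ A ω) = c * prob p B := by
  have hcomm : prob p (fun ω => B ω ∧ A ω) = prob p (fun ω => A ω ∧ B ω) :=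
    Finset.sum_congr rfl fun ω _ => if_congr and_comm rfl rfl
  rcases (prob_nonneg hp B).eq_or_lt with hB | hB
  · rw [← hB, mul_zero]
    exact le_antisymm (hB ▸ prob_mono hp fun ω h => h.1) (prob_nonneg hp _)
  · rw [hcomm, ← hcond hB, div_mul_cancel₀ _ hB.ne']

theorem prob_and_eq_one_sub_mul_of_cond_eq (hp : ∀ ω, 0 ≤ p ω) (Y : Ω → Fin 2)
    {B : Ω → Prop} [DecidablePred B] {c : ℝ}
    (hcond : 0 < prob p B → prob p (fun ω => Y ω = 0 ∧ B ω) / prob p B = c) :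
    prob p (fun ω => B ω ∧ Y ω = 0) = c * prob p B ∧
      prob p (fun ω => B ω ∧ Y ω = 1) = (1 - c) * prob p B := by
  have h0 := prob_and_eq_mul_of_cond_eq hp hcond
  have hsplit := prob_eq_sum_prob_and_eq (p := p) Y B
  rw [Fin.sum_univ_two, h0] at hsplit
  exact ⟨h0, by linarith⟩

end FiniteProb

open FiniteProb

open Classical in
theorem stmt_3_general {Ω : Type*} [Fintype Ω]
    (p : Ω → ℝ) (hp : ∀ ω, 0 ≤ p ω)
    (Y : Ω → Fin 2) (U V : Ω → ℝ)
    -- balanced labels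
    (hY0 : ∑ ω : Ω, (if Y ω = 0 then p ω else 0) = 1 / 2)
    (hY1 : ∑ ω : Ω, (if Y ω = 1 then p ω else 0) = 1 / 2)
    -- (a) conditional independence of U and V given Y:
    -- P(U=u, V=v | Y=i) = P(U=u | Y=i) · P(V=v | Y=i)
    (hci : ∀ (i : Fin 2) (u v : ℝ),
      (∑ ω : Ω, if U ω = u ∧ V ω = v ∧ Y ω = i then p ω else 0) /
          (∑ ω : Ω, if Y ω = i then p ω else 0) =
        ((∑ ω : Ω, if U ω = u ∧ Y ω = i then p ω else 0) /
            (∑ ω : Ω, if Y ω = i then p ω else 0)) *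
          ((∑ ω : Ω, if V ω = v ∧ Y ω = i then p ω else 0) /
            (∑ ω : Ω, if Y ω = i then p ω else 0)))
    -- (b) calibration: P(Y=0 | U=u) = u and P(Y=0 | V=v) = v
    (hcalU : ∀ u : ℝ, 0 < (∑ ω : Ω, if U ω = u then p ω else 0) →
      (∑ ω : Ω, if Y ω = 0 ∧ U ω = u then p ω else 0) /
          (∑ ω : Ω, if U ω = u then p ω else 0) = u)
    (hcalV : ∀ v : ℝ, 0 < (∑ ω : Ω, if V ω = v then p ω else 0) →
      (∑ ω : Ω, if Y ω = 0 ∧ V ω = v then p ω else 0) /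
          (∑ ω : Ω, if V ω = v then p ω else 0) = v) :
    ∀ u v : ℝ,
      (∑ ω : Ω, if U ω = u ∧ V ω = v then p ω else 0) =
        2 * (u * v + (1 - u) * (1 - v)) *
          (∑ ω : Ω, if U ω = u then p ω else 0) *
          (∑ ω : Ω, if V ω = v then p ω else 0) := by
  intro u v
  obtain ⟨hU0, hU1⟩ := prob_and_eq_one_sub_mul_of_cond_eq hp Y (hcalU u)
  obtain ⟨hV0, hV1⟩ := prob_and_eq_one_sub_mul_of_cond_eq hp Y (hcalV v)
  have hjoint : ∀ i : Fin 2, prob p (fun ω => U ω = u ∧ V ω = v ∧ Y ω = i) =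
      2 * prob p (fun ω => U ω = u ∧ Y ω = i) * prob p (fun ω => V ω = v ∧ Y ω = i) := by
    intro i
    have hhalf : prob p (fun ω => Y ω = i) = 1 / 2 := by fin_cases i <;> assumption
    have h : prob p _ / prob p _ = prob p _ / prob p _ * (prob p _ / prob p _) := hci i u v
    rw [hhalf] at h
    linarith
  change prob p _ = 2 * (u * v + (1 - u) * (1 - v)) * prob p _ * prob p _
  rw [prob_eq_sum_prob_and_eq Y, Fin.sum_univ_two]
  simp only [and_assoc, hjoint, hU0, hU1, hV0, hV1]
  ring

open Classical in
/-- if `Y : Ω → {0,1}` is balanced and `U, V : Ω → ℝ` are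
conditionally independent given `Y` and calibrated (`P(Y=0|U=u) = u` whenever
`P(U=u) > 0`, and likewise for `V`), then
`P(U=u, V=v) = 2·(uv+(1-u)(1-v))·P(U=u)·P(V=v)` for all `u, v`. -/
theorem stmt_3 {Ω : Type*} [Fintype Ω] [Nonempty Ω]
    (p : Ω → ℝ) (hp : ∀ ω, 0 ≤ p ω) (hsum : ∑ ω : Ω, p ω = 1)
    (Y : Ω → Fin 2) (U V : Ω → ℝ)
    -- balanced labels
    (hY0 : ∑ ω : Ω, (if Y ω = 0 then p ω else 0) = 1 / 2)
    (hY1 : ∑ ω : Ω, (if Y ω = 1 then p ω else 0) = 1 / 2)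
    -- (a) conditional independence of U and V given Y:
    -- P(U=u, V=v | Y=i) = P(U=u | Y=i) · P(V=v | Y=i)
    (hci : ∀ (i : Fin 2) (u v : ℝ),
      (∑ ω : Ω, if U ω = u ∧ V ω = v ∧ Y ω = i then p ω else 0) /
          (∑ ω : Ω, if Y ω = i then p ω else 0) =
        ((∑ ω : Ω, if U ω = u ∧ Y ω = i then p ω else 0) /
            (∑ ω : Ω, if Y ω = i then p ω else 0)) *
          ((∑ ω : Ω, if V ω = v ∧ Y ω = i then p ω else 0) /
            (∑ ω : Ω, if Y ω = i then p ω else 0)))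
    -- (b) calibration: P(Y=0 | U=u) = u and P(Y=0 | V=v) = v
    (hcalU : ∀ u : ℝ, 0 < (∑ ω : Ω, if U ω = u then p ω else 0) →
      (∑ ω : Ω, if Y ω = 0 ∧ U ω = u then p ω else 0) /
          (∑ ω : Ω, if U ω = u then p ω else 0) = u)
    (hcalV : ∀ v : ℝ, 0 < (∑ ω : Ω, if V ω = v then p ω else 0) →
      (∑ ω : Ω, if Y ω = 0 ∧ V ω = v then p ω else 0) /
          (∑ ω : Ω, if V ω = v then p ω else 0) = v) :
    ∀ u v : ℝ,
      (∑ ω : Ω, if U ω = u ∧ V ω = v then p ω else 0) =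
        2 * (u * v + (1 - u) * (1 - v)) *
          (∑ ω : Ω, if U ω = u then p ω else 0) *
          (∑ ω : Ω, if V ω = v then p ω else 0) :=
  stmt_3_general p hp Y U V hY0 hY1 hci hcalU hcalV
end

section
/- Let a, q ∈ (0,1) with a ≠ 1/2 and a ≠ q. Define the debiased posterior r := a·(1-q) / (a·(1-q) + q·(1-a)), the undebiased prediction ŷ := 0 if a > 1/2 and ŷ := 1 otherwise, and the debiased prediction ỹ := 0 if r > 1/2 and ỹ := 1 otherwise. Define the class probabilities p₀ := a, p₁ := 1-a (true conditional probabilities) and q₀ := q, q₁ := 1-q (bias-only probabilities). Then ỹ ≠ ŷ if and only if q_{ŷ} > p_{ŷ}, i.e. the debiased prediction differs from the undebiased prediction exactly when the bias-only model's probability on the undebiased predicted class exceeds the true conditional probability of that class. -/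
/-- Theorem 2 of the paper, binary case: with true posterior `a`,
bias-only probability `q`, debiased posterior `r := a(1-q)/(a(1-q)+q(1-a))`,
undebiased prediction `ŷ` and debiased prediction `ỹ`, we have
`ỹ ≠ ŷ ↔ q_{ŷ} > p_{ŷ}`. -/
theorem stmt_7 (a q : ℝ) (ha : a ∈ Set.Ioo (0 : ℝ) 1) (hq : q ∈ Set.Ioo (0 : ℝ) 1)
    (ha2 : a ≠ 1 / 2) (haq : a ≠ q)
    (r : ℝ) (hr : r = a * (1 - q) / (a * (1 - q) + q * (1 - a)))
    (yhat ytil : Fin 2)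
    (hyhat : yhat = if 1 / 2 < a then 0 else 1)
    (hytil : ytil = if 1 / 2 < r then 0 else 1)
    (pp qq : Fin 2 → ℝ)
    (hpp : pp = fun i => if i = 0 then a else 1 - a)
    (hqq : qq = fun i => if i = 0 then q else 1 - q) :
    ytil ≠ yhat ↔ pp yhat < qq yhat := by
  obtain ⟨ha0, ha1⟩ := ha
  obtain ⟨hq0, hq1⟩ := hq
  have hden : 0 < a * (1 - q) + q * (1 - a) := by nlinarith
  have hrgt : 1 / 2 < r ↔ q < a := by
    rw [hr, lt_div_iff₀ hden]
    constructor <;> intro h <;> nlinarith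
  subst hpp hqq hyhat hytil
  by_cases h : 1 / 2 < a
  · by_cases hqa : q < a
    · have h1 : 1 / 2 < r := hrgt.mpr hqa
      rw [if_pos h, if_pos h1]
      norm_num
      linarith
    · have h1 : ¬ 1 / 2 < r := fun hc => hqa (hrgt.mp hc)
      rw [if_pos h, if_neg h1]
      norm_num
      exact lt_of_le_of_ne (not_lt.mp hqa) haq
  · by_cases hqa : q < a
    · have h1 : 1 / 2 < r := hrgt.mpr hqa
      rw [if_neg h, if_pos h1]
      norm_num
      linarith
    · have h1 : ¬ 1 / 2 < r := fun hc => hqa (hrgt.mp hc)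
      rw [if_neg h, if_neg h1]
      norm_num
      linarith [not_lt.mp hqa]
end

section
/- Let l₀, ε ∈ ℝ satisfy ε > 0, 0 < l₀ - ε, and l₀ + ε < 1, and let α ∈ (0,1). Then L_{α, l₀+ε} = l₀ - ε if and only if α = 1/2 + ε / (2·l₀·(1-l₀) + 2·ε²), and likewise U_{α, l₀-ε} = l₀ + ε if and only if α = 1/2 + ε / (2·l₀·(1-l₀) + 2·ε²). -/
open Set

/-- The paper's lower bound `L_{α,b}`, in its positive-denominator form. -/
noncomputable def lowerBound (α b : ℝ) : ℝ := (1 - α) * b / (α * (1 - b) + (1 - α) * b)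

/-- The paper's upper bound `U_{α,b}`, in its positive-denominator form. -/
noncomputable def upperBound (α b : ℝ) : ℝ := α * b / ((1 - α) * (1 - b) + α * b)

/-- Both `lowerBound α b = c` and `upperBound α c = b` clear denominators to the balance equation
`(1 - α) b (1 - c) = α c (1 - b)`, which is linear in `α` with this solution. -/
noncomputable def criticalCertainty (b c : ℝ) : ℝ := b * (1 - c) / (b * (1 - c) + c * (1 - b))

theorem div_add_eq_iff_mul_one_sub {u v z : ℝ} (h : v + u ≠ 0) :
    u / (v + u) = z ↔ u * (1 - z) = v * z := by
  rw [div_eq_iff h]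
  constructor <;> intro h' <;> linear_combination h'

theorem eq_criticalCertainty_iff {α b c : ℝ} (h : b * (1 - c) + c * (1 - b) ≠ 0) :
    α = criticalCertainty b c ↔ (1 - α) * b * (1 - c) = α * c * (1 - b) := by
  rw [criticalCertainty, eq_div_iff h]
  constructor <;> intro h' <;> linear_combination -h'

theorem criticalCertainty_denom_pos {b c : ℝ} (hb : b ∈ Ioo 0 1) (hc : c ∈ Ioo 0 1) :
    0 < b * (1 - c) + c * (1 - b) := by
  have := mul_pos hb.1 (sub_pos.2 hc.2)
  have := mul_pos hc.1 (sub_pos.2 hb.2)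
  linarith

theorem lowerBound_eq_iff {α b c : ℝ} (hα : α ∈ Ioo 0 1) (hb : b ∈ Ioo 0 1)
    (hc : c ∈ Ioo 0 1) : lowerBound α b = c ↔ α = criticalCertainty b c := by
  have hden : 0 < α * (1 - b) + (1 - α) * b := by
    have := mul_pos hα.1 (sub_pos.2 hb.2)
    have := mul_pos (sub_pos.2 hα.2) hb.1
    linarith
  rw [lowerBound, div_add_eq_iff_mul_one_sub hden.ne',
    eq_criticalCertainty_iff (criticalCertainty_denom_pos hb hc).ne']
  constructor <;> intro h <;> linear_combination h

theorem upperBound_eq_iff {α b c : ℝ} (hα : α ∈ Ioo 0 1) (hb : b ∈ Ioo 0 1)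
    (hc : c ∈ Ioo 0 1) : upperBound α c = b ↔ α = criticalCertainty b c := by
  have hden : 0 < (1 - α) * (1 - c) + α * c := by
    have := mul_pos (sub_pos.2 hα.2) (sub_pos.2 hc.2)
    have := mul_pos hα.1 hc.1
    linarith
  rw [upperBound, div_add_eq_iff_mul_one_sub hden.ne',
    eq_criticalCertainty_iff (criticalCertainty_denom_pos hb hc).ne']
  constructor <;> intro h <;> linear_combination -h

theorem criticalCertainty_add_sub {l ε : ℝ} (h : 2 * l * (1 - l) + 2 * ε ^ 2 ≠ 0) :
    criticalCertainty (l + ε) (l - ε) = 1 / 2 + ε / (2 * l * (1 - l) + 2 * ε ^ 2) := by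
  have hden : (l + ε) * (1 - (l - ε)) + (l - ε) * (1 - (l + ε)) =
      2 * l * (1 - l) + 2 * ε ^ 2 := by ring
  rw [criticalCertainty, hden, div_add_div _ _ two_ne_zero h,
    div_eq_div_iff h (mul_ne_zero two_ne_zero h)]
  ring

/-- with `0 < l₀ - ε`, `l₀ + ε < 1`, `ε > 0` and `α ∈ (0,1)`:
`L_{α,l₀+ε} = l₀-ε ↔ α = 1/2 + ε/(2l₀(1-l₀)+2ε²)`, and likewise
`U_{α,l₀-ε} = l₀+ε ↔ α = 1/2 + ε/(2l₀(1-l₀)+2ε²)`. -/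
theorem stmt_11 (l₀ ε : ℝ) (hε : 0 < ε) (h1 : 0 < l₀ - ε) (h2 : l₀ + ε < 1)
    (α : ℝ) (hα : α ∈ Set.Ioo (0 : ℝ) 1) :
    ((1 - α) * (l₀ + ε) / (α * (1 - (l₀ + ε)) + (1 - α) * (l₀ + ε)) = l₀ - ε ↔
      α = 1 / 2 + ε / (2 * l₀ * (1 - l₀) + 2 * ε ^ 2)) ∧
    (α * (l₀ - ε) / ((1 - α) * (1 - (l₀ - ε)) + α * (l₀ - ε)) = l₀ + ε ↔
      α = 1 / 2 + ε / (2 * l₀ * (1 - l₀) + 2 * ε ^ 2)) := by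
  have hb : l₀ + ε ∈ Ioo 0 1 := ⟨by linarith, h2⟩
  have hc : l₀ - ε ∈ Ioo 0 1 := ⟨h1, by linarith⟩
  have hden : 2 * l₀ * (1 - l₀) + 2 * ε ^ 2 ≠ 0 := by
    have := criticalCertainty_denom_pos hb hc
    intro h0
    linarith
  rw [← criticalCertainty_add_sub hden]
  exact ⟨lowerBound_eq_iff hα hb hc, upperBound_eq_iff hα hb hc⟩
end

section
/- Let l₀, ε ∈ ℝ satisfy ε > 0, 0 < l₀ - ε, and l₀ + ε < 1. For α ∈ (0,1), define C(α) := l₀ - ε - (l₀+ε)·(1-α) / ((l₀+ε)·(1-α) + (1-l₀-ε)·α), which equals the paper's quantity l₀ - ε - (l₀+ε)/((l₀+ε) + (1-l₀-ε)·α/(1-α)). Then: (i) C(α) = l₀ - ε - L_{α, l₀+ε}; (ii) C is strictly increasing on (0,1); and (iii) C(α) > 0 if and only if α > 1/2 + ε / (2·l₀·(1-l₀) + 2·ε²). -/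
/-- with `ε > 0`, `0 < l₀ - ε`, `l₀ + ε < 1` and
`C(α) := l₀ - ε - (l₀+ε)(1-α)/((l₀+ε)(1-α)+(1-l₀-ε)α)`, which equals the
paper's quantity `l₀ - ε - (l₀+ε)/((l₀+ε)+(1-l₀-ε)·α/(1-α))`, one has:
(i) `C(α) = l₀ - ε - L_{α,l₀+ε}`; (ii) `C` is strictly increasing on `(0,1)`;
(iii) `C(α) > 0 ↔ α > 1/2 + ε/(2l₀(1-l₀)+2ε²)`. -/
theorem stmt_13 (l₀ ε : ℝ) (hε : 0 < ε) (h1 : 0 < l₀ - ε) (h2 : l₀ + ε < 1)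
    (C : ℝ → ℝ)
    (hC : ∀ α : ℝ, C α =
      l₀ - ε - (l₀ + ε) * (1 - α) / ((l₀ + ε) * (1 - α) + (1 - l₀ - ε) * α)) :
    (∀ α ∈ Set.Ioo (0 : ℝ) 1,
      C α = l₀ - ε - (l₀ + ε) / ((l₀ + ε) + (1 - l₀ - ε) * (α / (1 - α)))) ∧
    (∀ α ∈ Set.Ioo (0 : ℝ) 1,
      C α = l₀ - ε -
        (1 - α) * (l₀ + ε) / (α * (1 - (l₀ + ε)) + (1 - α) * (l₀ + ε))) ∧
    StrictMonoOn C (Set.Ioo (0 : ℝ) 1) ∧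
    (∀ α ∈ Set.Ioo (0 : ℝ) 1,
      (0 < C α ↔ 1 / 2 + ε / (2 * l₀ * (1 - l₀) + 2 * ε ^ 2) < α)) := by
  have hb0 : 0 < l₀ + ε := by linarith
  have hb1 : l₀ + ε < 1 := h2
  have hD : ∀ α ∈ Set.Ioo (0 : ℝ) 1,
      0 < (l₀ + ε) * (1 - α) + (1 - l₀ - ε) * α := by
    intro α ⟨ha0, ha1⟩
    nlinarith
  refine ⟨?_, ?_, ?_, ?_⟩
  · intro α ⟨ha0, ha1⟩
    have h1α : (1 : ℝ) - α ≠ 0 := by linarith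
    have hd := hD α ⟨ha0, ha1⟩
    rw [hC]
    have hd2 : (l₀ + ε) + (1 - l₀ - ε) * (α / (1 - α)) ≠ 0 := by
      have : (l₀ + ε) + (1 - l₀ - ε) * (α / (1 - α)) =
          ((l₀ + ε) * (1 - α) + (1 - l₀ - ε) * α) / (1 - α) := by
        field_simp
      rw [this]
      positivity
    field_simp
  · intro α ⟨ha0, ha1⟩
    rw [hC]
    ring_nf
  · intro x ⟨hx0, hx1⟩ y ⟨hy0, hy1⟩ hxy
    rw [hC, hC]
    have hdx := hD x ⟨hx0, hx1⟩
    have hdy := hD y ⟨hy0, hy1⟩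
    have key : (l₀ + ε) * (1 - y) / ((l₀ + ε) * (1 - y) + (1 - l₀ - ε) * y) <
        (l₀ + ε) * (1 - x) / ((l₀ + ε) * (1 - x) + (1 - l₀ - ε) * x) := by
      rw [div_lt_div_iff₀ hdy hdx]
      nlinarith [mul_pos (sub_pos.2 hxy) (sub_pos.2 hb1)]
    linarith
  · intro α ⟨ha0, ha1⟩
    have hd := hD α ⟨ha0, ha1⟩
    have hK : 0 < 2 * l₀ * (1 - l₀) + 2 * ε ^ 2 := by nlinarith
    rw [hC]
    rw [sub_pos, div_lt_iff₀ hd]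
    constructor
    · intro h
      have h' : ε < (α - 1/2) * (2 * l₀ * (1 - l₀) + 2 * ε ^ 2) := by nlinarith
      have : ε / (2 * l₀ * (1 - l₀) + 2 * ε ^ 2) < α - 1/2 := by
        rw [div_lt_iff₀ hK]; linarith
      linarith
    · intro h
      have h' : ε < (α - 1/2) * (2 * l₀ * (1 - l₀) + 2 * ε ^ 2) := by
        rw [← div_lt_iff₀ hK]; linarith
      nlinarith [h']
end

section
/- Let X, L, Y be nonempty finite types and let p be a probability mass function on X × L × Y × Y, with coordinates written (x, l, y, s) where the last coordinate is the sampling intention S taking values in the same type as the label Y. Assume the sampling intention depends only on L: for all x, l, y, s with P(X=x, L=l, Y=y) > 0 (which forces P(L=l) > 0), P(S=s | X=x, L=l, Y=y) = P(S=s | L=l). Write {S=Y} for the event that the last two coordinates are equal. Then for all x, l, y with P(X=x, L=l, S=Y) > 0, P(X=x, L=l) > 0, P(X=x, L=l, Y=y) > 0, and P(L=l) > 0: P(Y=y | X=x, L=l, S=Y) = P(S=y | L=l) · P(Y=y | X=x, L=l) · P(X=x, L=l) / P(X=x, L=l, S=Y). -/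
theorem stmt_15_general {X L Y : Type*} [Fintype X] [Fintype L] [Fintype Y]
    (p : X × L × Y × Y → ℝ)
    -- the sampling intention depends only on L:
    (hS : ∀ (x : X) (l : L) (y : Y) (s : Y),
      0 < (∑ s' : Y, p (x, l, y, s')) →
      p (x, l, y, s) / (∑ s' : Y, p (x, l, y, s')) =
        (∑ x' : X, ∑ y' : Y, p (x', l, y', s)) /
          (∑ x' : X, ∑ y' : Y, ∑ s' : Y, p (x', l, y', s'))) :
    ∀ (x : X) (l : L) (y : Y),
      0 < (∑ y' : Y, p (x, l, y', y')) →                    -- P(X=x,L=l,S=Y)>0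
      0 < (∑ y' : Y, ∑ s' : Y, p (x, l, y', s')) →          -- P(X=x,L=l)>0
      0 < (∑ s' : Y, p (x, l, y, s')) →                     -- P(X=x,L=l,Y=y)>0
      0 < (∑ x' : X, ∑ y' : Y, ∑ s' : Y, p (x', l, y', s')) →   -- P(L=l)>0
      p (x, l, y, y) / (∑ y' : Y, p (x, l, y', y')) =
        ((∑ x' : X, ∑ y' : Y, p (x', l, y', y)) /
            (∑ x' : X, ∑ y' : Y, ∑ s' : Y, p (x', l, y', s'))) *
          ((∑ s' : Y, p (x, l, y, s')) /
            (∑ y' : Y, ∑ s' : Y, p (x, l, y', s'))) *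
          (∑ y' : Y, ∑ s' : Y, p (x, l, y', s')) /
          (∑ y' : Y, p (x, l, y', y')) := by
  intro x l y _ hXL hXLY _
  -- P(X=x, L=l, Y=y, S=y) = P(S=y | L=l) · P(X=x, L=l, Y=y)
  have hdiag := (div_eq_iff hXLY.ne').1 (hS x l y y hXLY)
  rw [hdiag, mul_assoc _ (_ / _), div_mul_cancel₀ _ hXL.ne', mul_div_assoc]

/-- first identity of the leakage-neutral decomposition: pmf on
`X × L × Y × Y` with coordinates `(x, l, y, s)`, `s` being the sampling
intention `S`. If `P(S=s | X=x, L=l, Y=y) = P(S=s | L=l)` whenever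
`P(X=x, L=l, Y=y) > 0`, then
`P(Y=y | X=x, L=l, S=Y) = P(S=y | L=l) · P(Y=y | X=x, L=l) · P(X=x, L=l) / P(X=x, L=l, S=Y)`
under the stated positivity conditions. -/
theorem stmt_15 {X L Y : Type*} [Fintype X] [Fintype L] [Fintype Y]
    [Nonempty X] [Nonempty L] [Nonempty Y]
    (p : X × L × Y × Y → ℝ) (hp : ∀ z, 0 ≤ p z)
    (hsum : ∑ z : X × L × Y × Y, p z = 1)
    -- the sampling intention depends only on L:
    (hS : ∀ (x : X) (l : L) (y : Y) (s : Y),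
      0 < (∑ s' : Y, p (x, l, y, s')) →
      p (x, l, y, s) / (∑ s' : Y, p (x, l, y, s')) =
        (∑ x' : X, ∑ y' : Y, p (x', l, y', s)) /
          (∑ x' : X, ∑ y' : Y, ∑ s' : Y, p (x', l, y', s'))) :
    ∀ (x : X) (l : L) (y : Y),
      0 < (∑ y' : Y, p (x, l, y', y')) →                    -- P(X=x,L=l,S=Y)>0
      0 < (∑ y' : Y, ∑ s' : Y, p (x, l, y', s')) →          -- P(X=x,L=l)>0
      0 < (∑ s' : Y, p (x, l, y, s')) →                     -- P(X=x,L=l,Y=y)>0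
      0 < (∑ x' : X, ∑ y' : Y, ∑ s' : Y, p (x', l, y', s')) →   -- P(L=l)>0
      p (x, l, y, y) / (∑ y' : Y, p (x, l, y', y')) =
        ((∑ x' : X, ∑ y' : Y, p (x', l, y', y)) /
            (∑ x' : X, ∑ y' : Y, ∑ s' : Y, p (x', l, y', s'))) *
          ((∑ s' : Y, p (x, l, y, s')) /
            (∑ y' : Y, ∑ s' : Y, p (x, l, y', s'))) *
          (∑ y' : Y, ∑ s' : Y, p (x, l, y', s')) /
          (∑ y' : Y, p (x, l, y', y')) :=
  stmt_15_general p hS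
end

section
/- Let X, L, Y be nonempty finite types and let p be a probability mass function on X × L × Y × Y, with coordinates written (x, l, y, s) where the last coordinate is the sampling intention S taking values in the same type as the label Y. Assume: (i) the label is independent of L, i.e. P(Y=y | L=l) = P(Y=y) for all y and all l with P(L=l) > 0; and (ii) the sampling intention depends only on L, i.e. P(S=s | X=x, L=l, Y=y) = P(S=s | L=l) for all x, l, y, s with P(X=x, L=l, Y=y) > 0. Write {S=Y} for the event that the last two coordinates are equal. Then for all l, y with P(L=l, S=Y) > 0 and P(L=l) > 0: P(Y=y | L=l, S=Y) = P(S=y | L=l) · P(Y=y) · P(L=l) / P(L=l, S=Y). -/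
/-!
By (ii), `P(X=x, L=l, Y=y, S=y) = P(X=x, L=l, Y=y) · P(S=y | L=l)` for every `x` (when
`P(X=x, L=l, Y=y) = 0` both sides vanish by nonnegativity). Summing over `x` gives
`P(L=l, Y=y, S=Y) = P(L=l, Y=y) · P(S=y | L=l)`, and (i) factors `P(L=l, Y=y)` as
`P(Y=y) · P(L=l)`; dividing by `P(L=l, S=Y)` is the claim.
-/

open Finset

theorem eq_mul_of_div_eq_of_le {K : Type*} [Field K] [LinearOrder K] [IsStrictOrderedRing K]
    {a t c : K} (ha : 0 ≤ a) (hat : a ≤ t) (h : 0 < t → a / t = c) : a = t * c := by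
  rcases (ha.trans hat).lt_or_eq with ht | ht
  · rw [← h ht, mul_div_cancel₀ _ ht.ne']
  · rw [← ht, zero_mul]
    exact le_antisymm (ht ▸ hat) ha

theorem sum_diag_eq_mul_cond_intention {X L Y : Type*} [Fintype X] [Fintype Y]
    (p : X × L × Y × Y → ℝ) (hp : ∀ z, 0 ≤ p z)
    (hS : ∀ (x : X) (l : L) (y : Y) (s : Y),
      0 < (∑ s' : Y, p (x, l, y, s')) →
      p (x, l, y, s) / (∑ s' : Y, p (x, l, y, s')) =
        (∑ x' : X, ∑ y' : Y, p (x', l, y', s)) /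
          (∑ x' : X, ∑ y' : Y, ∑ s' : Y, p (x', l, y', s')))
    (l : L) (y : Y) :
    ∑ x : X, p (x, l, y, y) =
      (∑ x : X, ∑ s : Y, p (x, l, y, s)) *
        ((∑ x' : X, ∑ y' : Y, p (x', l, y', y)) /
          (∑ x' : X, ∑ y' : Y, ∑ s' : Y, p (x', l, y', s'))) := by
  rw [sum_mul]
  refine sum_congr rfl fun x _ => eq_mul_of_div_eq_of_le (hp _) ?_ (hS x l y y)
  exact single_le_sum (fun s _ => hp (x, l, y, s)) (mem_univ y)

theorem stmt_16_general {X L Y : Type*} [Fintype X] [Fintype L] [Fintype Y]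
    (p : X × L × Y × Y → ℝ) (hp : ∀ z, 0 ≤ p z)
    -- (i) the label is independent of L: P(Y=y | L=l) = P(Y=y)
    (hYL : ∀ (y : Y) (l : L),
      0 < (∑ x' : X, ∑ y' : Y, ∑ s' : Y, p (x', l, y', s')) →
      (∑ x' : X, ∑ s' : Y, p (x', l, y, s')) /
          (∑ x' : X, ∑ y' : Y, ∑ s' : Y, p (x', l, y', s')) =
        ∑ x' : X, ∑ l' : L, ∑ s' : Y, p (x', l', y, s'))
    -- (ii) the sampling intention depends only on L
    (hS : ∀ (x : X) (l : L) (y : Y) (s : Y),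
      0 < (∑ s' : Y, p (x, l, y, s')) →
      p (x, l, y, s) / (∑ s' : Y, p (x, l, y, s')) =
        (∑ x' : X, ∑ y' : Y, p (x', l, y', s)) /
          (∑ x' : X, ∑ y' : Y, ∑ s' : Y, p (x', l, y', s'))) :
    ∀ (l : L) (y : Y),
      0 < (∑ x' : X, ∑ y' : Y, p (x', l, y', y')) →         -- P(L=l, S=Y) > 0
      0 < (∑ x' : X, ∑ y' : Y, ∑ s' : Y, p (x', l, y', s')) →   -- P(L=l) > 0
      (∑ x' : X, p (x', l, y, y)) / (∑ x' : X, ∑ y' : Y, p (x', l, y', y')) =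
        ((∑ x' : X, ∑ y' : Y, p (x', l, y', y)) /
            (∑ x' : X, ∑ y' : Y, ∑ s' : Y, p (x', l, y', s'))) *
          (∑ x' : X, ∑ l' : L, ∑ s' : Y, p (x', l', y, s')) *
          (∑ x' : X, ∑ y' : Y, ∑ s' : Y, p (x', l, y', s')) /
          (∑ x' : X, ∑ y' : Y, p (x', l, y', y')) := by
  intro l y _ hL
  have hLY := (div_eq_iff hL.ne').mp (hYL y l hL)
  rw [sum_diag_eq_mul_cond_intention p hp hS l y, hLY]
  ring

/-- second identity of the leakage-neutral decomposition: pmf on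
`X × L × Y × Y` with coordinates `(x, l, y, s)`. If (i) `P(Y=y | L=l) = P(Y=y)`
whenever `P(L=l) > 0` and (ii) `P(S=s | X=x, L=l, Y=y) = P(S=s | L=l)` whenever
`P(X=x, L=l, Y=y) > 0`, then
`P(Y=y | L=l, S=Y) = P(S=y | L=l) · P(Y=y) · P(L=l) / P(L=l, S=Y)`
under the stated positivity conditions. -/
theorem stmt_16 {X L Y : Type*} [Fintype X] [Fintype L] [Fintype Y]
    [Nonempty X] [Nonempty L] [Nonempty Y]
    (p : X × L × Y × Y → ℝ) (hp : ∀ z, 0 ≤ p z)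
    (hsum : ∑ z : X × L × Y × Y, p z = 1)
    -- (i) the label is independent of L: P(Y=y | L=l) = P(Y=y)
    (hYL : ∀ (y : Y) (l : L),
      0 < (∑ x' : X, ∑ y' : Y, ∑ s' : Y, p (x', l, y', s')) →
      (∑ x' : X, ∑ s' : Y, p (x', l, y, s')) /
          (∑ x' : X, ∑ y' : Y, ∑ s' : Y, p (x', l, y', s')) =
        ∑ x' : X, ∑ l' : L, ∑ s' : Y, p (x', l', y, s'))
    -- (ii) the sampling intention depends only on L
    (hS : ∀ (x : X) (l : L) (y : Y) (s : Y),
      0 < (∑ s' : Y, p (x, l, y, s')) →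
      p (x, l, y, s) / (∑ s' : Y, p (x, l, y, s')) =
        (∑ x' : X, ∑ y' : Y, p (x', l, y', s)) /
          (∑ x' : X, ∑ y' : Y, ∑ s' : Y, p (x', l, y', s'))) :
    ∀ (l : L) (y : Y),
      0 < (∑ x' : X, ∑ y' : Y, p (x', l, y', y')) →         -- P(L=l, S=Y) > 0
      0 < (∑ x' : X, ∑ y' : Y, ∑ s' : Y, p (x', l, y', s')) →   -- P(L=l) > 0
      (∑ x' : X, p (x', l, y, y)) / (∑ x' : X, ∑ y' : Y, p (x', l, y', y')) =
        ((∑ x' : X, ∑ y' : Y, p (x', l, y', y)) /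
            (∑ x' : X, ∑ y' : Y, ∑ s' : Y, p (x', l, y', s'))) *
          (∑ x' : X, ∑ l' : L, ∑ s' : Y, p (x', l', y, s')) *
          (∑ x' : X, ∑ y' : Y, ∑ s' : Y, p (x', l, y', s')) /
          (∑ x' : X, ∑ y' : Y, p (x', l, y', y')) :=
  stmt_16_general p hp hYL hS
end

section
/- Let X, L, Y be nonempty finite types and let p be a probability mass function on X × L × Y × Y, with coordinates written (x, l, y, s) where the last coordinate is the sampling intention S taking values in the same type as the label Y. Assume: (i) P(Y=y | L=l) = P(Y=y) for all y and all l with P(L=l) > 0; and (ii) P(S=s | X=x, L=l, Y=y) = P(S=s | L=l) for all x, l, y, s with P(X=x, L=l, Y=y) > 0. Write {S=Y} for the event that the last two coordinates are equal. Then for all x, l, y with P(X=x, L=l, S=Y) > 0, P(L=l, S=Y) > 0, P(X=x, L=l) > 0, P(X=x, L=l, Y=y) > 0, P(L=l) > 0, and P(Y=y) > 0: P(Y=y | X=x, L=l, S=Y) = [P(Y=y | L=l, S=Y) · P(Y=y | X=x, L=l) / P(Y=y)] · κ(x,l), where κ(x,l) := P(X=x, L=l) · P(L=l, S=Y) / (P(X=x,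 L=l, S=Y) · P(L=l)) does not depend on y. In particular, as a function of y, P(Y=y | X=x, L=l, S=Y) is proportional to P(Y=y | L=l, S=Y) · P(Y=y | X=x, L=l) / P(Y=y). -/
/-!
Conditional independence of `S` from `(X, Y)` given `L` factors the joint mass as
`P(x, l, y, s) · P(l) = P(x, l, y) · P(l, S = s)`, also where `P(x, l, y) = 0` since the mass is
nonnegative. Evaluating at `s = y` and summing over `x` gives
`P(l, Y = y, S = y) · P(l) = P(l, y) · P(l, S = y)`, and independence of `Y` from `L` turns
`P(l, y)` into `P(y) · P(l)`, so `P(l, Y = y, S = y) = P(y) · P(l, S = y)`. Substituting both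
identities into the right-hand side cancels it down to `P(x, l, y, y) / P(x, l, S = Y)`.
-/

open Finset

theorem eq_sum_mul_of_div_sum_eq {ι : Type*} [Fintype ι] {f : ι → ℝ} (hf : ∀ i, 0 ≤ f i)
    {j : ι} {c : ℝ} (h : 0 < ∑ i, f i → f j / ∑ i, f i = c) : f j = (∑ i, f i) * c := by
  rcases (sum_nonneg fun i _ => hf i).lt_or_eq with hpos | hzero
  · rw [← h hpos, mul_div_cancel₀ _ hpos.ne']
  · rw [← hzero, zero_mul]
    exact (sum_eq_zero_iff_of_nonneg fun i _ => hf i).mp hzero.symm j (mem_univ j)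

section LeakageNeutral

variable {X L Y : Type*} [Fintype X] [Fintype Y] {p : X × L × Y × Y → ℝ}

theorem joint_eq_mul_of_condIndep (hp : ∀ z, 0 ≤ p z)
    (hS : ∀ (x : X) (l : L) (y : Y) (s : Y),
      0 < (∑ s' : Y, p (x, l, y, s')) →
      p (x, l, y, s) / (∑ s' : Y, p (x, l, y, s')) =
        (∑ x' : X, ∑ y' : Y, p (x', l, y', s)) /
          (∑ x' : X, ∑ y' : Y, ∑ s' : Y, p (x', l, y', s')))
    (x : X) (l : L) (y s : Y) :
    p (x, l, y, s) = (∑ s' : Y, p (x, l, y, s')) *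
      ((∑ x' : X, ∑ y' : Y, p (x', l, y', s)) /
        (∑ x' : X, ∑ y' : Y, ∑ s' : Y, p (x', l, y', s'))) :=
  eq_sum_mul_of_div_sum_eq (fun s' => hp (x, l, y, s')) (hS x l y s)

theorem marginal_label_eq_sampling_mul_marginal [Fintype L] (hp : ∀ z, 0 ≤ p z)
    (hYL : ∀ (y : Y) (l : L),
      0 < (∑ x' : X, ∑ y' : Y, ∑ s' : Y, p (x', l, y', s')) →
      (∑ x' : X, ∑ s' : Y, p (x', l, y, s')) /
          (∑ x' : X, ∑ y' : Y, ∑ s' : Y, p (x', l, y', s')) =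
        ∑ x' : X, ∑ l' : L, ∑ s' : Y, p (x', l', y, s'))
    (hS : ∀ (x : X) (l : L) (y : Y) (s : Y),
      0 < (∑ s' : Y, p (x, l, y, s')) →
      p (x, l, y, s) / (∑ s' : Y, p (x, l, y, s')) =
        (∑ x' : X, ∑ y' : Y, p (x', l, y', s)) /
          (∑ x' : X, ∑ y' : Y, ∑ s' : Y, p (x', l, y', s')))
    (l : L) (y : Y) (hl : 0 < ∑ x' : X, ∑ y' : Y, ∑ s' : Y, p (x', l, y', s')) :
    ∑ x' : X, p (x', l, y, y) =
      (∑ x' : X, ∑ l' : L, ∑ s' : Y, p (x', l', y, s')) *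
        ∑ x' : X, ∑ y' : Y, p (x', l, y', y) := by
  calc ∑ x' : X, p (x', l, y, y)
      = (∑ x' : X, ∑ s' : Y, p (x', l, y, s')) *
          ((∑ x' : X, ∑ y' : Y, p (x', l, y', y)) /
            (∑ x' : X, ∑ y' : Y, ∑ s' : Y, p (x', l, y', s'))) := by
        rw [sum_mul]
        exact sum_congr rfl fun x' _ => joint_eq_mul_of_condIndep hp hS x' l y y
    _ = _ := by
        rw [(div_eq_iff hl.ne').mp (hYL y l hl)]
        field_simp

end LeakageNeutral

theorem stmt_17_general {X L Y : Type*} [Fintype X] [Fintype L] [Fintype Y]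
    (p : X × L × Y × Y → ℝ) (hp : ∀ z, 0 ≤ p z)
    -- (i) the label is independent of L: P(Y=y | L=l) = P(Y=y)
    (hYL : ∀ (y : Y) (l : L),
      0 < (∑ x' : X, ∑ y' : Y, ∑ s' : Y, p (x', l, y', s')) →
      (∑ x' : X, ∑ s' : Y, p (x', l, y, s')) /
          (∑ x' : X, ∑ y' : Y, ∑ s' : Y, p (x', l, y', s')) =
        ∑ x' : X, ∑ l' : L, ∑ s' : Y, p (x', l', y, s'))
    -- (ii) the sampling intention depends only on L
    (hS : ∀ (x : X) (l : L) (y : Y) (s : Y),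
      0 < (∑ s' : Y, p (x, l, y, s')) →
      p (x, l, y, s) / (∑ s' : Y, p (x, l, y, s')) =
        (∑ x' : X, ∑ y' : Y, p (x', l, y', s)) /
          (∑ x' : X, ∑ y' : Y, ∑ s' : Y, p (x', l, y', s'))) :
    ∀ (x : X) (l : L) (y : Y),
      0 < (∑ y' : Y, p (x, l, y', y')) →                  -- P(X=x,L=l,S=Y)>0
      0 < (∑ x' : X, ∑ y' : Y, p (x', l, y', y')) →       -- P(L=l,S=Y)>0
      0 < (∑ y' : Y, ∑ s' : Y, p (x, l, y', s')) →        -- P(X=x,L=l)>0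
      0 < (∑ s' : Y, p (x, l, y, s')) →                   -- P(X=x,L=l,Y=y)>0
      0 < (∑ x' : X, ∑ y' : Y, ∑ s' : Y, p (x', l, y', s')) →  -- P(L=l)>0
      0 < (∑ x' : X, ∑ l' : L, ∑ s' : Y, p (x', l', y, s')) →  -- P(Y=y)>0
      p (x, l, y, y) / (∑ y' : Y, p (x, l, y', y')) =
        (((∑ x' : X, p (x', l, y, y)) /
              (∑ x' : X, ∑ y' : Y, p (x', l, y', y'))) *
            ((∑ s' : Y, p (x, l, y, s')) /
              (∑ y' : Y, ∑ s' : Y, p (x, l, y', s'))) /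
            (∑ x' : X, ∑ l' : L, ∑ s' : Y, p (x', l', y, s'))) *
          ((∑ y' : Y, ∑ s' : Y, p (x, l, y', s')) *
              (∑ x' : X, ∑ y' : Y, p (x', l, y', y')) /
            ((∑ y' : Y, p (x, l, y', y')) *
              (∑ x' : X, ∑ y' : Y, ∑ s' : Y, p (x', l, y', s')))) := by
  intro x l y hxlS hlS hxl _ hl hy
  rw [marginal_label_eq_sampling_mul_marginal hp hYL hS l y hl,
    joint_eq_mul_of_condIndep hp hS x l y y]
  field_simp

/-- the leakage-neutral decomposition: pmf on `X × L × Y × Y`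
with coordinates `(x, l, y, s)`. If (i) `P(Y=y | L=l) = P(Y=y)` whenever
`P(L=l) > 0` and (ii) `P(S=s | X=x, L=l, Y=y) = P(S=s | L=l)` whenever
`P(X=x, L=l, Y=y) > 0`, then under the stated positivity conditions
`P(Y=y | X=x, L=l, S=Y) = [P(Y=y | L=l, S=Y) · P(Y=y | X=x, L=l) / P(Y=y)] · κ(x,l)`
with `κ(x,l) := P(X=x,L=l) · P(L=l,S=Y) / (P(X=x,L=l,S=Y) · P(L=l))`
independent of `y`; in particular, as a function of `y`,
`P(Y=y | X=x, L=l, S=Y) ∝ P(Y=y | L=l, S=Y) · P(Y=y | X=x, L=l) / P(Y=y)`. -/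
theorem stmt_17 {X L Y : Type*} [Fintype X] [Fintype L] [Fintype Y]
    [Nonempty X] [Nonempty L] [Nonempty Y]
    (p : X × L × Y × Y → ℝ) (hp : ∀ z, 0 ≤ p z)
    (hsum : ∑ z : X × L × Y × Y, p z = 1)
    -- (i) the label is independent of L: P(Y=y | L=l) = P(Y=y)
    (hYL : ∀ (y : Y) (l : L),
      0 < (∑ x' : X, ∑ y' : Y, ∑ s' : Y, p (x', l, y', s')) →
      (∑ x' : X, ∑ s' : Y, p (x', l, y, s')) /
          (∑ x' : X, ∑ y' : Y, ∑ s' : Y, p (x', l, y', s')) =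
        ∑ x' : X, ∑ l' : L, ∑ s' : Y, p (x', l', y, s'))
    -- (ii) the sampling intention depends only on L
    (hS : ∀ (x : X) (l : L) (y : Y) (s : Y),
      0 < (∑ s' : Y, p (x, l, y, s')) →
      p (x, l, y, s) / (∑ s' : Y, p (x, l, y, s')) =
        (∑ x' : X, ∑ y' : Y, p (x', l, y', s)) /
          (∑ x' : X, ∑ y' : Y, ∑ s' : Y, p (x', l, y', s'))) :
    ∀ (x : X) (l : L) (y : Y),
      0 < (∑ y' : Y, p (x, l, y', y')) →                  -- P(X=x,L=l,S=Y)>0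
      0 < (∑ x' : X, ∑ y' : Y, p (x', l, y', y')) →       -- P(L=l,S=Y)>0
      0 < (∑ y' : Y, ∑ s' : Y, p (x, l, y', s')) →        -- P(X=x,L=l)>0
      0 < (∑ s' : Y, p (x, l, y, s')) →                   -- P(X=x,L=l,Y=y)>0
      0 < (∑ x' : X, ∑ y' : Y, ∑ s' : Y, p (x', l, y', s')) →  -- P(L=l)>0
      0 < (∑ x' : X, ∑ l' : L, ∑ s' : Y, p (x', l', y, s')) →  -- P(Y=y)>0
      p (x, l, y, y) / (∑ y' : Y, p (x, l, y', y')) =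
        (((∑ x' : X, p (x', l, y, y)) /
              (∑ x' : X, ∑ y' : Y, p (x', l, y', y'))) *
            ((∑ s' : Y, p (x, l, y, s')) /
              (∑ y' : Y, ∑ s' : Y, p (x, l, y', s'))) /
            (∑ x' : X, ∑ l' : L, ∑ s' : Y, p (x', l', y, s'))) *
          ((∑ y' : Y, ∑ s' : Y, p (x, l, y', s')) *
              (∑ x' : X, ∑ y' : Y, p (x', l, y', y')) /
            ((∑ y' : Y, p (x, l, y', y')) *
              (∑ x' : X, ∑ y' : Y, ∑ s' : Y, p (x', l, y', s')))) :=
  stmt_17_general p hp hYL hS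
end
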